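/- arXiv:2412.16585 — 5 statements merged into one kernel-verified Lean document; each statement's English description precedes it below -/
import Mathlib

section
/- Let G be a caching instance in which some set 𝒞₀ of caches all have the same neighborhood (i.e., are accessible by exactly the same set of users). If |𝒞₀| > S where S is the number of contents, let G' be obtained by deleting from 𝒞₀ all but the S caches of largest capacity. Then for every target ℓ, there is a feasible caching allocation of G achieving cache hit rate at least ℓ if and only if there is one for G'. -/
attribute [local instance] Classical.propDecidable

noncomputable section

variable {C U S : Type*} [Fintype C] [Fintype U] [Fintype S]

/-- The set of contents stored (under allocation `Z`) in some cache adjacent to user `u`. -/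
def Hset (adj : U → C → Prop) (Z : C → Finset S) (u : U) : Finset S :=
  Finset.univ.filter (fun s => ∃ c, adj u c ∧ s ∈ Z c)

/-- The cache hit rate of allocation `Z`. -/
def CH (adj : U → C → Prop) (w : U → ℚ) (p : U → S → ℚ) (Z : C → Finset S) : ℚ :=
  ∑ u, ∑ s ∈ Hset adj Z u, w u * p u s

/-! In any allocation, the contents stored in the twin caches `C₀` are already stored in at most
`S` of them (one cache per content), which we pad to a set `D ⊆ C₀` of exactly `S` caches.
Match the kept caches bijectively with `D`, fixing the caches they share, and let every kept
cache store what its partner stored. A partner is either the cache itself or a deleted cache, so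
capacities are respected; and since all caches of `C₀` are seen by the same users, the union of
their contents, hence the hit rate, is unchanged. -/

open Finset

lemma Finset.exists_subset_card_eq_biUnion_eq {C S : Type*} (Z : C → Finset S) (A : Finset C)
    {n : ℕ} (hn : #(A.biUnion Z) ≤ n) (hnA : n ≤ #A) :
    ∃ D ⊆ A, #D = n ∧ D.biUnion Z = A.biUnion Z := by
  have hpick : ∀ s ∈ A.biUnion Z, ∃ c ∈ A, s ∈ Z c := fun s hs => mem_biUnion.1 hs
  choose pick hpickA hpickZ using hpick
  have hsub : (A.biUnion Z).attach.image (fun s => pick s.1 s.2) ⊆ A :=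
    image_subset_iff.2 fun s _ => hpickA s.1 s.2
  obtain ⟨D, hpicks, hDA, hD⟩ :=
    exists_subsuperset_card_eq hsub (card_image_le.trans (by rwa [card_attach])) hnA
  refine ⟨D, hDA, hD, (biUnion_subset_biUnion_of_subset_left Z hDA).antisymm fun s hs => ?_⟩
  have hpickD : pick s hs ∈ D := hpicks (mem_image_of_mem _ (mem_attach _ ⟨s, hs⟩))
  exact mem_biUnion.2 ⟨pick s hs, hpickD, hpickZ s hs⟩

lemma Finset.exists_bijOn_and_eqOn_inter_of_card_eq {α : Type*} {A B : Finset α}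
    (h : #A = #B) : ∃ f : α → α, Set.BijOn f A B ∧ Set.EqOn f id ↑(A ∩ B) := by
  obtain ⟨g, hg⟩ := exists_equiv_extend_of_card_eq (t := B)
    (s := univ.filter fun a : A => (a : α) ∈ B) (f := Subtype.val)
    (by rwa [Fintype.card_coe]) (by intro; simp +contextual) Subtype.val_injective.injOn
  refine ⟨fun a => if ha : a ∈ A then g ⟨a, ha⟩ else a, ⟨?_, ?_, ?_⟩, ?_⟩
  · intro a ha
    simp [dif_pos (mem_coe.1 ha)]
  · intro a ha a' ha' heq
    simpa [dif_pos (mem_coe.1 ha), dif_pos (mem_coe.1 ha'), Subtype.ext_iff] using heq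
  · intro b hb
    exact ⟨g.symm ⟨b, hb⟩, (g.symm ⟨b, hb⟩).2, by simp⟩
  · intro a ha
    obtain ⟨ha, hb⟩ := mem_inter.1 ha
    simpa [dif_pos ha] using hg ⟨a, ha⟩ (by simpa using hb)

lemma Hset_subset_of_biUnion_subset {C U S : Type*} [Fintype C] [Fintype S]
    (adj : U → C → Prop) {C₀ : Finset C} (hsame : ∀ c ∈ C₀, ∀ c' ∈ C₀, ∀ u, adj u c ↔ adj u c')
    {Z Z' : C → Finset S} (hout : ∀ c ∉ C₀, Z c ⊆ Z' c)
    (hin : C₀.biUnion Z ⊆ C₀.biUnion Z') (u : U) : Hset adj Z u ⊆ Hset adj Z' u := by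
  intro s
  simp only [Hset, mem_filter, mem_univ, true_and]
  rintro ⟨c, hadj, hs⟩
  by_cases hc : c ∈ C₀
  · obtain ⟨c', hc', hs'⟩ := mem_biUnion.1 (hin (mem_biUnion.2 ⟨c, hc, hs⟩))
    exact ⟨c', (hsame c hc c' hc' u).1 hadj, hs'⟩
  · exact ⟨c, hadj, hout c hc hs⟩

lemma CH_eq_of_biUnion_eq {C U S : Type*} [Fintype C] [Fintype U] [Fintype S]
    (adj : U → C → Prop) {C₀ : Finset C} (hsame : ∀ c ∈ C₀, ∀ c' ∈ C₀, ∀ u, adj u c ↔ adj u c')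
    (w : U → ℚ) (p : U → S → ℚ) {Z Z' : C → Finset S}
    (hout : ∀ c ∉ C₀, Z' c = Z c) (hin : C₀.biUnion Z' = C₀.biUnion Z) :
    CH adj w p Z' = CH adj w p Z := by
  have hH (u : U) : Hset adj Z' u = Hset adj Z u :=
    (Hset_subset_of_biUnion_subset adj hsame (fun c hc => (hout c hc).subset) hin.subset u).antisymm
      (Hset_subset_of_biUnion_subset adj hsame (fun c hc => (hout c hc).symm.subset)
        hin.symm.subset u)
  simp only [CH, hH]

def relocate {C S : Type*} (C₀ keep : Finset C) (f : C → C) (Z : C → Finset S) (c : C) :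
    Finset S :=
  if c ∈ keep then Z (f c) else if c ∈ C₀ then ∅ else Z c

lemma relocate_eq_empty {C S : Type*} {C₀ keep : Finset C} {f : C → C} {Z : C → Finset S}
    {c : C} (hc : c ∈ C₀ \ keep) : relocate C₀ keep f Z c = ∅ := by
  obtain ⟨hc₀, hc⟩ := mem_sdiff.1 hc
  simp [relocate, hc, hc₀]

lemma relocate_of_notMem {C S : Type*} {C₀ keep : Finset C} {f : C → C} {Z : C → Finset S}
    (hkeep : keep ⊆ C₀) {c : C} (hc : c ∉ C₀) : relocate C₀ keep f Z c = Z c := by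
  have hck : c ∉ keep := fun h => hc (hkeep h)
  simp [relocate, hc, hck]

lemma sum_relocate_le {C S : Type*} {C₀ keep : Finset C} {f : C → C} {Z : C → Finset S}
    (σ : S → ℕ) (κ : C → ℕ) (hZ : ∀ c, ∑ s ∈ Z c, σ s ≤ κ c)
    (hκ : ∀ c ∈ keep, κ (f c) ≤ κ c) (c : C) : ∑ s ∈ relocate C₀ keep f Z c, σ s ≤ κ c := by
  unfold relocate
  split_ifs with hk
  · exact (hZ (f c)).trans (hκ c hk)
  · simp
  · exact hZ c

lemma biUnion_relocate {C S : Type*} {C₀ keep : Finset C} {f : C → C} {Z : C → Finset S}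
    (hkeep : keep ⊆ C₀) : C₀.biUnion (relocate C₀ keep f Z) = (keep.image f).biUnion Z := by
  ext s
  simp only [image_biUnion, mem_biUnion]
  constructor
  · rintro ⟨c, hc, hs⟩
    by_cases hck : c ∈ keep
    · exact ⟨c, hck, by simpa [relocate, hck] using hs⟩
    · simp [relocate_eq_empty (mem_sdiff.2 ⟨hc, hck⟩)] at hs
  · rintro ⟨c, hck, hs⟩
    exact ⟨c, hkeep hck, by simpa [relocate, hck] using hs⟩

/-- The instance `G'` is modelled by forcing deleted caches to store nothing. -/
theorem delete_duplicate_caches_general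
    (adj : U → C → Prop) (σ : S → ℕ) (κ : C → ℕ) (p : U → S → ℚ) (w : U → ℚ)
    (C₀ keep : Finset C)
    (hsame : ∀ c ∈ C₀, ∀ c' ∈ C₀, ∀ u, adj u c ↔ adj u c')
    (hkeep : keep ⊆ C₀) (hkeepcard : keep.card = Fintype.card S)
    (hmax : ∀ c ∈ C₀ \ keep, ∀ c' ∈ keep, κ c ≤ κ c')
    (ℓ : ℚ) :
    (∃ Z : C → Finset S, (∀ c, (∑ s ∈ Z c, σ s) ≤ κ c) ∧ ℓ ≤ CH adj w p Z) ↔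
    (∃ Z : C → Finset S, (∀ c, (∑ s ∈ Z c, σ s) ≤ κ c) ∧
      (∀ c ∈ C₀ \ keep, Z c = ∅) ∧ ℓ ≤ CH adj w p Z) := by
  refine ⟨fun ⟨Z, hZ, hℓ⟩ => ?_, fun ⟨Z, hZ, _, hℓ⟩ => ⟨Z, hZ, hℓ⟩⟩
  have hcontents : #(C₀.biUnion Z) ≤ #keep := hkeepcard ▸ card_le_univ _
  obtain ⟨D, hDC₀, hDcard, hDZ⟩ :=
    exists_subset_card_eq_biUnion_eq Z C₀ hcontents (card_le_card hkeep)
  obtain ⟨f, hf, hfix⟩ := exists_bijOn_and_eqOn_inter_of_card_eq hDcard.symm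
  have himage : keep.image f = D := coe_injective (by rw [coe_image, hf.image_eq])
  -- A kept cache takes over either its own contents or those of a deleted cache.
  have hκ : ∀ c ∈ keep, κ (f c) ≤ κ c := by
    intro c hc
    by_cases hfc : f c ∈ keep
    · rw [hf.injOn hfc hc (hfix (mem_inter.2 ⟨hfc, hf.mapsTo hc⟩))]
    · exact hmax _ (mem_sdiff.2 ⟨hDC₀ (hf.mapsTo hc), hfc⟩) c hc
  refine ⟨relocate C₀ keep f Z, sum_relocate_le σ κ hZ hκ, fun _ hc => relocate_eq_empty hc, ?_⟩
  rwa [CH_eq_of_biUnion_eq adj hsame w p (fun c hc => relocate_of_notMem hkeep hc)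
    (by rw [biUnion_relocate hkeep, himage, hDZ])]

/-- Deleting all but the `S` largest-capacity caches from a set `C₀` of caches with
identical neighborhoods preserves the achievable cache hit rates.  The instance `G'`
is modelled by forcing deleted caches to store nothing. -/
theorem delete_duplicate_caches
    (adj : U → C → Prop) (σ : S → ℕ) (κ : C → ℕ) (p : U → S → ℚ) (w : U → ℚ)
    (C₀ keep : Finset C)
    (hsame : ∀ c ∈ C₀, ∀ c' ∈ C₀, ∀ u, adj u c ↔ adj u c')
    (hbig : Fintype.card S < C₀.card)
    (hkeep : keep ⊆ C₀) (hkeepcard : keep.card = Fintype.card S)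
    (hmax : ∀ c ∈ C₀ \ keep, ∀ c' ∈ keep, κ c ≤ κ c')
    (ℓ : ℚ) :
    (∃ Z : C → Finset S, (∀ c, (∑ s ∈ Z c, σ s) ≤ κ c) ∧ ℓ ≤ CH adj w p Z) ↔
    (∃ Z : C → Finset S, (∀ c, (∑ s ∈ Z c, σ s) ≤ κ c) ∧
      (∀ c ∈ C₀ \ keep, Z c = ∅) ∧ ℓ ≤ CH adj w p Z) :=
  delete_duplicate_caches_general adj σ κ p w C₀ keep hsame hkeep hkeepcard hmax ℓ

end
end

section
/- Let G be a homogeneous caching instance (all content sizes equal 1) and let G' be obtained from G by, for every maximal set of caches with identical neighborhoods, replacing them by a single cache with the same neighborhood whose capacity is the sum of their capacities. Then for every target ℓ, G admits a feasible caching allocation with cache hit rate at least ℓ if and only if G' does. Moreover, if G has U users, then G' has at most 2^U caches. -/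
/-!
Merging caches along any map `f` that preserves neighbourhoods loses nothing: a user sees the
same contents whether the caches of each fibre of `f` hold their own contents or one cache
holds their union, and since all contents have unit size, any set of at most
`∑ c ∈ f⁻¹(c'), κ c` contents can conversely be split among the caches of the fibre.
Merging caches with identical neighbourhoods is the case `f c = N(c)`, the neighbourhood of
`c`, so the merged caches are indexed by subsets of the users.
-/

attribute [local instance] Classical.propDecidable

noncomputable section

variable {C U S : Type*} [Fintype C] [Fintype U] [Fintype S]

theorem Finset.exists_biUnion_eq_of_card_le_sum {ι α : Type*} [DecidableEq ι] [DecidableEq α]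
    (κ : ι → ℕ) (F : Finset ι) (T : Finset α) (hT : T.card ≤ ∑ i ∈ F, κ i) :
    ∃ Z : ι → Finset α, (∀ i, (Z i).card ≤ κ i) ∧ F.biUnion Z = T := by
  induction F using Finset.induction_on generalizing T with
  | empty => exact ⟨fun _ => ∅, fun _ => by simp, by simpa [eq_comm] using hT⟩
  | @insert a F ha ih =>
    rw [Finset.sum_insert ha] at hT
    obtain ⟨T₁, hT₁T, hT₁card⟩ := T.exists_subset_card_eq (min_le_right (κ a) T.card)
    obtain ⟨Z, hZcard, hZT⟩ := ih (T \ T₁) (by rw [card_sdiff_of_subset hT₁T]; omega)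
    refine ⟨Function.update Z a T₁, fun i => ?_, ?_⟩
    · rcases eq_or_ne i a with rfl | hi
      · simp [hT₁card]
      · simpa [hi] using hZcard i
    · have hF : F.biUnion (Function.update Z a T₁) = F.biUnion Z :=
        biUnion_congr rfl fun i hi => Function.update_of_ne (ne_of_mem_of_not_mem hi ha) _ _
      rw [biUnion_insert, Function.update_self, hF, hZT, union_sdiff_of_subset hT₁T]

section Merge

variable {C' : Type*} [Fintype C'] [DecidableEq C']

def pushAlloc (f : C → C') (Z : C → Finset S) (c' : C') : Finset S :=
  (Finset.univ.filter fun c => f c = c').biUnion Z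

omit [Fintype U] in
theorem Hset_pushAlloc {adj : U → C → Prop} {adj' : U → C' → Prop} {f : C → C'}
    (hf : ∀ u c, adj u c ↔ adj' u (f c)) (Z : C → Finset S) (u : U) :
    Hset adj' (pushAlloc f Z) u = Hset adj Z u := by
  ext s
  simp only [Hset, pushAlloc, Finset.mem_filter, Finset.mem_univ, true_and, Finset.mem_biUnion]
  constructor
  · rintro ⟨_, hu, c, rfl, hs⟩
    exact ⟨c, (hf u c).2 hu, hs⟩
  · rintro ⟨c, hu, hs⟩
    exact ⟨f c, (hf u c).1 hu, c, rfl, hs⟩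

theorem CH_pushAlloc {adj : U → C → Prop} {adj' : U → C' → Prop} {f : C → C'}
    (hf : ∀ u c, adj u c ↔ adj' u (f c)) (w : U → ℚ) (p : U → S → ℚ) (Z : C → Finset S) :
    CH adj' w p (pushAlloc f Z) = CH adj w p Z := by
  simp only [CH, Hset_pushAlloc hf]

omit [Fintype S] [Fintype C'] in
theorem card_pushAlloc_le {f : C → C'} {κ : C → ℕ} {Z : C → Finset S}
    (hZ : ∀ c, (Z c).card ≤ κ c) (c' : C') :
    (pushAlloc f Z c').card ≤ ∑ c ∈ Finset.univ.filter (fun c => f c = c'), κ c :=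
  Finset.card_biUnion_le.trans (Finset.sum_le_sum fun c _ => hZ c)

omit [Fintype S] [Fintype C'] in
theorem exists_pushAlloc_eq {f : C → C'} {κ : C → ℕ} {Z' : C' → Finset S}
    (hZ' : ∀ c', (Z' c').card ≤ ∑ c ∈ Finset.univ.filter (fun c => f c = c'), κ c) :
    ∃ Z : C → Finset S, (∀ c, (Z c).card ≤ κ c) ∧ pushAlloc f Z = Z' := by
  choose Zf hZfcard hZf using fun c' => Finset.exists_biUnion_eq_of_card_le_sum κ _ _ (hZ' c')
  refine ⟨fun c => Zf (f c) c, fun c => hZfcard _ c, funext fun c' => ?_⟩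
  rw [← hZf c']
  refine Finset.biUnion_congr rfl fun c hc => ?_
  rw [(Finset.mem_filter.1 hc).2]

theorem exists_CH_ge_iff_pushAlloc {adj : U → C → Prop} {adj' : U → C' → Prop} {f : C → C'}
    (hf : ∀ u c, adj u c ↔ adj' u (f c)) (κ : C → ℕ) (w : U → ℚ) (p : U → S → ℚ) (ℓ : ℚ) :
    (∃ Z : C → Finset S, (∀ c, (Z c).card ≤ κ c) ∧ ℓ ≤ CH adj w p Z) ↔
      ∃ Z' : C' → Finset S,
        (∀ c', (Z' c').card ≤ ∑ c ∈ Finset.univ.filter (fun c => f c = c'), κ c) ∧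
        ℓ ≤ CH adj' w p Z' := by
  constructor
  · rintro ⟨Z, hZ, hℓ⟩
    exact ⟨pushAlloc f Z, card_pushAlloc_le hZ, (CH_pushAlloc hf w p Z).symm ▸ hℓ⟩
  · rintro ⟨Z', hZ', hℓ⟩
    obtain ⟨Z, hZ, rfl⟩ := exists_pushAlloc_eq hZ'
    exact ⟨Z, hZ, CH_pushAlloc hf w p Z ▸ hℓ⟩

end Merge

/-- Homogeneous instance: merging all caches with identical neighborhoods into a single
cache (indexed by the common neighborhood, a `Finset U`) with summed capacity preserves
achievable cache hit rates; the merged instance has at most `2 ^ U` caches. -/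
theorem merge_caches_hom
    (adj : U → C → Prop) (κ : C → ℕ) (p : U → S → ℚ) (w : U → ℚ) (ℓ : ℚ) :
    ((∃ Z : C → Finset S, (∀ c, (Z c).card ≤ κ c) ∧ ℓ ≤ CH adj w p Z) ↔
     (∃ Z' : Finset U → Finset S,
        (∀ N : Finset U, (Z' N).card ≤
          ∑ c ∈ Finset.univ.filter
              (fun c : C => Finset.univ.filter (fun u : U => adj u c) = N), κ c) ∧
        ℓ ≤ CH (fun (u : U) (N : Finset U) => u ∈ N) w p Z'))
    ∧ Fintype.card (Finset U) ≤ 2 ^ Fintype.card U :=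
  ⟨exists_CH_ge_iff_pushAlloc (adj := adj) (adj' := fun u N => u ∈ N)
      (f := fun c => Finset.univ.filter (adj · c)) (fun u c => by simp) κ w p ℓ,
    Fintype.card_finset.le⟩
end
end

section
/- Let φ be a monotone 3-CNF formula with variables x₁,…,xₙ and clauses C₁,…,Cₘ, each clause containing 2 or 3 distinct variables. Construct a homogeneous caching instance as follows: the catalog is {True, False}; for each variable xᵢ there is a cache c_{xᵢ} of capacity 1; for each clause Cⱼ there is a user u_{Cⱼ} of weight 1 requesting True and False each with probability 1/2; cache c_{xᵢ} is adjacent to user u_{Cⱼ} iff xᵢ appears in Cⱼ. Then φ has a not-all-equal satisfying assignment (every clause contains a variable set to True and a variable set to False) if and only if there is a feasible caching allocation with cache hit rate at least m (the number of users). -/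
attribute [local instance] Classical.propDecidable

noncomputable section

variable {C U S : Type*} [Fintype C] [Fintype U] [Fintype S]

/-- NAE-SAT reduction: a monotone CNF formula (clauses of size 2 or 3) has an NAE
satisfying assignment iff the constructed homogeneous caching instance (catalog `Bool`,
one capacity-1 cache per variable, one weight-1 user per clause requesting `true` and
`false` each with probability 1/2) admits a feasible allocation of hit rate at least `m`. -/
theorem nae_sat_reduction (n m : ℕ) (Cl : Fin m → Finset (Fin n))
    (hsize : ∀ j, (Cl j).card = 2 ∨ (Cl j).card = 3) :
    (∃ a : Fin n → Bool, ∀ j, (∃ i ∈ Cl j, a i = true) ∧ (∃ i ∈ Cl j, a i = false)) ↔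
    (∃ Z : Fin n → Finset Bool, (∀ i, (Z i).card ≤ 1) ∧
      (m : ℚ) ≤ CH (fun (j : Fin m) (i : Fin n) => i ∈ Cl j)
                   (fun _ => 1) (fun _ _ => (1 : ℚ) / 2) Z) := by
  have hCH : ∀ Z : Fin n → Finset Bool,
      CH (fun (j : Fin m) (i : Fin n) => i ∈ Cl j) (fun _ => 1) (fun _ _ => (1 : ℚ) / 2) Z
        = ∑ j : Fin m, ((Hset (fun (j : Fin m) (i : Fin n) => i ∈ Cl j) Z j).card : ℚ) / 2 := by
    intro Z
    unfold CH
    refine Finset.sum_congr rfl (fun j _ => ?_)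
    simp [Finset.sum_const, div_eq_mul_inv, mul_comm]
  constructor
  · rintro ⟨a, ha⟩
    refine ⟨fun i => {a i}, fun i => by simp, ?_⟩
    have hfull : ∀ j, Hset (fun (j : Fin m) (i : Fin n) => i ∈ Cl j) (fun i => {a i}) j = Finset.univ := by
      intro j
      obtain ⟨⟨i1, hi1, ha1⟩, ⟨i2, hi2, ha2⟩⟩ := ha j
      refine Finset.eq_univ_of_forall (fun s => ?_)
      simp only [Hset, Finset.mem_filter, Finset.mem_univ, true_and, Finset.mem_singleton]
      cases s with
      | true => exact ⟨i1, hi1, ha1.symm⟩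
      | false => exact ⟨i2, hi2, ha2.symm⟩
    rw [hCH]
    simp [hfull]
  · rintro ⟨Z, hZ, hge⟩
    rw [hCH] at hge
    have hle : ∀ j, ((Hset (fun (j : Fin m) (i : Fin n) => i ∈ Cl j) Z j).card : ℚ) / 2 ≤ 1 := by
      intro j
      have : (Hset (fun (j : Fin m) (i : Fin n) => i ∈ Cl j) Z j).card ≤ 2 := by
        have := Finset.card_le_card (Finset.subset_univ (Hset (fun (j : Fin m) (i : Fin n) => i ∈ Cl j) Z j))
        simpa using this
      rw [div_le_one (by norm_num)]
      exact_mod_cast this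
    have heq : ∀ j, ((Hset (fun (j : Fin m) (i : Fin n) => i ∈ Cl j) Z j).card : ℚ) / 2 = 1 := by
      by_contra h
      push_neg at h
      obtain ⟨j0, hj0⟩ := h
      have hlt : ((Hset (fun (j : Fin m) (i : Fin n) => i ∈ Cl j) Z j0).card : ℚ) / 2 < 1 :=
        lt_of_le_of_ne (hle j0) hj0
      have : ∑ j : Fin m, ((Hset (fun (j : Fin m) (i : Fin n) => i ∈ Cl j) Z j).card : ℚ) / 2
          < ∑ _j : Fin m, (1 : ℚ) := by
        apply Finset.sum_lt_sum (fun j _ => hle j) ⟨j0, Finset.mem_univ _, hlt⟩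
      simp only [Finset.sum_const, Finset.card_univ, Fintype.card_fin, nsmul_eq_mul, mul_one] at this
      linarith
    refine ⟨fun i => if true ∈ Z i then true else false, fun j => ?_⟩
    have hmem : ∀ s : Bool, s ∈ Hset (fun (j : Fin m) (i : Fin n) => i ∈ Cl j) Z j := by
      intro s
      have hc := heq j
      have : (Hset (fun (j : Fin m) (i : Fin n) => i ∈ Cl j) Z j).card = 2 := by
        field_simp at hc
        exact_mod_cast hc
      have : Hset (fun (j : Fin m) (i : Fin n) => i ∈ Cl j) Z j = Finset.univ := by
        apply Finset.eq_univ_of_card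
        simpa using this
      rw [this]; exact Finset.mem_univ s
    constructor
    · have := hmem true
      simp only [Hset, Finset.mem_filter, Finset.mem_univ, true_and] at this
      obtain ⟨i, hij, hi⟩ := this
      exact ⟨i, hij, by simp [hi]⟩
    · have := hmem false
      simp only [Hset, Finset.mem_filter, Finset.mem_univ, true_and] at this
      obtain ⟨i, hij, hi⟩ := this
      refine ⟨i, hij, ?_⟩
      have ht : true ∉ Z i := by
        intro ht
        have hsub : ({true, false} : Finset Bool) ⊆ Z i :=
          Finset.insert_subset ht (Finset.singleton_subset_iff.mpr hi)
        have h2 : 2 ≤ (Z i).card := by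
          calc 2 = ({true, false} : Finset Bool).card := by decide
            _ ≤ _ := Finset.card_le_card hsub
        have := hZ i
        omega
      simp [ht]
end
end

section
/- Let G be a caching instance and let G' be obtained from G by merging every maximal set U* of users with identical neighborhoods into a single user u* with weight w(u*) = Σ_{u∈U*} w(u) and request probabilities p_{u*s} = (Σ_{u∈U*} w(u)·p_{us}) / w(u*). Then for every allocation Z, CH_G(Z) = CH_{G'}(Z); in particular, G has a feasible allocation with cache hit rate at least ℓ iff G' does. Moreover, if G has C caches then G' has at most 2^C users. -/
attribute [local instance] Classical.propDecidable

noncomputable section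

variable {C U S : Type*} [Fintype C] [Fintype U] [Fintype S]

/-- The neighborhood of a user. -/
def nbrU (adj : U → C → Prop) (u : U) : Finset C :=
  Finset.univ.filter (fun c => adj u c)

/-- Merging all users with identical neighborhoods into one user (indexed by the common
neighborhood, a `Finset C`) with summed weight and weighted-average request probabilities
preserves the cache hit rate of every allocation, hence achievable hit rates; the merged
instance has at most `2 ^ C` users. -/
theorem merge_users
    (adj : U → C → Prop) (σ : S → ℕ) (κ : C → ℕ) (p : U → S → ℚ) (w : U → ℚ)
    (hw : ∀ u, 0 < w u) (ℓ : ℚ) :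
    (∀ Z : C → Finset S,
       CH adj w p Z =
       CH (fun (N : Finset C) (c : C) => c ∈ N)
          (fun N => ∑ u ∈ Finset.univ.filter (fun u => nbrU adj u = N), w u)
          (fun N s => (∑ u ∈ Finset.univ.filter (fun u => nbrU adj u = N), w u * p u s) /
                      (∑ u ∈ Finset.univ.filter (fun u => nbrU adj u = N), w u)) Z)
    ∧ ((∃ Z : C → Finset S, (∀ c, (∑ s ∈ Z c, σ s) ≤ κ c) ∧ ℓ ≤ CH adj w p Z) ↔
       (∃ Z : C → Finset S, (∀ c, (∑ s ∈ Z c, σ s) ≤ κ c) ∧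
          ℓ ≤ CH (fun (N : Finset C) (c : C) => c ∈ N)
                 (fun N => ∑ u ∈ Finset.univ.filter (fun u => nbrU adj u = N), w u)
                 (fun N s =>
                   (∑ u ∈ Finset.univ.filter (fun u => nbrU adj u = N), w u * p u s) /
                   (∑ u ∈ Finset.univ.filter (fun u => nbrU adj u = N), w u)) Z))
    ∧ Fintype.card (Finset C) ≤ 2 ^ Fintype.card C := by
  have key : ∀ Z : C → Finset S,
      CH adj w p Z =
      CH (fun (N : Finset C) (c : C) => c ∈ N)
         (fun N => ∑ u ∈ Finset.univ.filter (fun u => nbrU adj u = N), w u)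
         (fun N s => (∑ u ∈ Finset.univ.filter (fun u => nbrU adj u = N), w u * p u s) /
                     (∑ u ∈ Finset.univ.filter (fun u => nbrU adj u = N), w u)) Z := by
    intro Z
    have hH : ∀ u, Hset adj Z u = Hset (fun (N : Finset C) (c : C) => c ∈ N) Z (nbrU adj u) := by
      intro u
      ext s
      simp [Hset, nbrU]
    unfold CH
    rw [← Finset.sum_fiberwise Finset.univ (fun u => nbrU adj u)
        (fun u => ∑ s ∈ Hset adj Z u, w u * p u s)]
    apply Finset.sum_congr rfl
    intro N _
    by_cases hNe : (Finset.univ.filter (fun u => nbrU adj u = N)).Nonempty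
    · have hW : (0:ℚ) < ∑ u ∈ Finset.univ.filter (fun u => nbrU adj u = N), w u :=
        Finset.sum_pos (fun u _ => hw u) hNe
      rw [Finset.sum_comm' (t' := Hset (fun (N : Finset C) (c : C) => c ∈ N) Z N)
          (s' := fun _ => Finset.univ.filter (fun u => nbrU adj u = N))]
      · apply Finset.sum_congr rfl
        intro s _
        simp only
        rw [mul_comm, div_mul_cancel₀ _ hW.ne']
      · intro u s
        rw [hH u]
        simp only [Finset.mem_filter, Finset.mem_univ, true_and]
        constructor
        · rintro ⟨hu, hs⟩
          exact ⟨hu, hu ▸ hs⟩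
        · rintro ⟨hu, hs⟩
          exact ⟨hu, by rw [hu]; exact hs⟩
    · rw [Finset.not_nonempty_iff_eq_empty] at hNe
      simp [hNe]
  refine ⟨key, ?_, ?_⟩
  · constructor
    · rintro ⟨Z, h1, h2⟩; exact ⟨Z, h1, (key Z) ▸ h2⟩
    · rintro ⟨Z, h1, h2⟩; exact ⟨Z, h1, (key Z) ▸ h2⟩
  · rw [Fintype.card_finset]
end
end

section
/- Let φ be a satisfiable 3-CNF formula (clauses of size 2 or 3, each variable occurring in exactly 3 clauses) and let G be the caching instance constructed as follows: catalog {xᵢ, x̄ᵢ : i ∈ [n]}; for each variable xᵢ, caches c_{xᵢ}, c'_{xᵢ} of capacity 1 and users u_{xᵢ}, u_{x̄ᵢ} of weight 1 with p_{u_{xᵢ} xᵢ} = 1 and p_{u_{x̄ᵢ} x̄ᵢ} = 1, both users adjacent to both caches; for each clause Cⱼ, a user u_{Cⱼ} of weight 1 requesting the contents corresponding to Cⱼ's literals with equal probability, adjacent to cache c_{xᵢ} for each variable xᵢ in Cⱼ, plus one (if |Cⱼ| = 2) or two (if |Cⱼ| = 3) private capacity-1 caches adjacent only to u_{Cⱼ}.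 Then φ has a satisfying assignment if and only if G has a feasible caching allocation with cache hit rate equal to the total number of users. -/
attribute [local instance] Classical.propDecidable

noncomputable section

variable {C U S : Type*} [Fintype C] [Fintype U] [Fintype S]

set_option linter.unusedSectionVars false in
lemma mem_Hset {adj : U → C → Prop} {Z : C → Finset S} {u : U} {s : S} :
    s ∈ Hset adj Z u ↔ ∃ c, adj u c ∧ s ∈ Z c := by
  simp [Hset]

lemma CH_eq_card_iff (adj : U → C → Prop) (p : U → S → ℚ) (Z : C → Finset S)
    (hp : ∀ u s, 0 ≤ p u s) (hsum : ∀ u, ∑ s, p u s = 1) :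
    CH adj (fun _ => 1) p Z = (Fintype.card U : ℚ) ↔
      ∀ u s, 0 < p u s → s ∈ Hset adj Z u := by
  have hle : ∀ u, ∑ s ∈ Hset adj Z u, p u s ≤ 1 := fun u => by
    rw [← hsum u]
    exact Finset.sum_le_sum_of_subset_of_nonneg (Finset.subset_univ _)
      (fun s _ _ => hp u s)
  have hcard : (Fintype.card U : ℚ) = ∑ _u : U, (1 : ℚ) := by simp
  rw [CH, hcard]
  simp only [one_mul]
  rw [Finset.sum_eq_sum_iff_of_le (fun u _ => hle u)]
  constructor
  · intro h u s hps
    by_contra hs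
    have h1 := h u (Finset.mem_univ u)
    have hlt : ∑ t ∈ Hset adj Z u, p u t < 1 := by
      rw [← hsum u]
      exact Finset.sum_lt_sum_of_subset (Finset.subset_univ _) (Finset.mem_univ s) hs hps
        (fun t _ _ => hp u t)
    linarith
  · intro h u _
    rw [← hsum u]
    refine (Finset.sum_subset (Finset.subset_univ _) ?_)
    intro s _ hs
    by_contra hps
    exact hs (h u s (lt_of_le_of_ne (hp u s) (Ne.symm hps)))

/-- Planar 3-SAT-E3 reduction (satisfiability side): a CNF formula over literals
`Fin n × Bool` (clauses of size 2 or 3, each variable occurring in exactly 3 clauses) is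
satisfiable iff the constructed homogeneous caching instance admits a feasible allocation
with cache hit rate equal to the total number `2n + m` of users.  Caches: for each
variable `i` two capacity-1 caches `c_{x_i}, c'_{x_i}` (coded `Sum.inl (Sum.inl i)` and
`Sum.inl (Sum.inr i)`), plus `|C_j| - 1` private capacity-1 caches per clause `j`.
Users: for each variable `i` and polarity `b` a weight-1 user requesting only the literal
`(i, b)`, adjacent to both of `i`'s caches; for each clause `j` a weight-1 user requesting
each literal of `C_j` with probability `1 / |C_j|`, adjacent to `c_{x_i}` for every
variable `i` occurring in `C_j` and to its private caches. -/
theorem planar_sat_reduction (n m : ℕ) (Cl : Fin m → Finset (Fin n × Bool))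
    (hsize : ∀ j, (Cl j).card = 2 ∨ (Cl j).card = 3)
    (hocc : ∀ i : Fin n,
      (Finset.univ.filter (fun j : Fin m => ∃ b, (i, b) ∈ Cl j)).card = 3) :
    (∃ a : Fin n → Bool, ∀ j, ∃ l ∈ Cl j, a l.1 = l.2) ↔
    (∃ Z : ((Fin n ⊕ Fin n) ⊕ (Σ j : Fin m, Fin ((Cl j).card - 1))) →
             Finset (Fin n × Bool),
       (∀ c, (Z c).card ≤ 1) ∧
       CH (fun (u : (Fin n × Bool) ⊕ Fin m)
               (c : (Fin n ⊕ Fin n) ⊕ (Σ j : Fin m, Fin ((Cl j).card - 1))) =>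
             match u, c with
             | Sum.inl (i, _), Sum.inl (Sum.inl i') => i' = i
             | Sum.inl (i, _), Sum.inl (Sum.inr i') => i' = i
             | Sum.inl _, Sum.inr _ => False
             | Sum.inr j, Sum.inl (Sum.inl i') => ∃ b, (i', b) ∈ Cl j
             | Sum.inr _, Sum.inl (Sum.inr _) => False
             | Sum.inr j, Sum.inr jk => jk.1 = j)
          (fun _ => 1)
          (fun u s =>
             match u with
             | Sum.inl l => if s = l then 1 else 0
             | Sum.inr j => if s ∈ Cl j then 1 / ((Cl j).card : ℚ) else 0)
          Z = ((2 * n + m : ℕ) : ℚ)) := by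
  have hc0 : ∀ j, (Cl j).card ≠ 0 := fun j => by rcases hsize j with h | h <;> omega
  have hcpos : ∀ j, (0:ℚ) < ((Cl j).card : ℚ) := fun j => by
    exact_mod_cast Nat.pos_of_ne_zero (hc0 j)
  have hp : ∀ (u : (Fin n × Bool) ⊕ Fin m) (s : Fin n × Bool), (0:ℚ) ≤
      (match u with
       | Sum.inl l => if s = l then 1 else 0
       | Sum.inr j => if s ∈ Cl j then 1 / ((Cl j).card : ℚ) else 0) := by
    rintro (l | j) s
    · dsimp only; split <;> norm_num
    · dsimp only; split
      · positivity
      · exact le_rfl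
  have hsum : ∀ (u : (Fin n × Bool) ⊕ Fin m), (∑ s : Fin n × Bool,
      (match u with
       | Sum.inl l => if s = l then 1 else 0
       | Sum.inr j => if s ∈ Cl j then 1 / ((Cl j).card : ℚ) else 0)) = 1 := by
    rintro (l | j)
    · simp [Finset.sum_ite_eq']
    · dsimp only
      rw [Finset.sum_ite_mem, Finset.univ_inter, Finset.sum_const, nsmul_eq_mul,
        mul_one_div, div_self (ne_of_gt (hcpos j))]
  have hcardU : ((2 * n + m : ℕ) : ℚ) = (Fintype.card ((Fin n × Bool) ⊕ Fin m) : ℚ) := by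
    simp only [Fintype.card_sum, Fintype.card_prod, Fintype.card_bool, Fintype.card_fin]
    push_cast; ring
  rw [hcardU]
  simp only [CH_eq_card_iff _ _ _ hp hsum]
  constructor
  · rintro ⟨a, ha⟩
    refine ⟨fun c => match c with
      | Sum.inl (Sum.inl i) => {(i, a i)}
      | Sum.inl (Sum.inr i) => {(i, !(a i))}
      | Sum.inr ⟨j, k⟩ =>
          if h : (k : ℕ) < ((Cl j).filter (fun l => a l.1 ≠ l.2)).toList.length
          then {((Cl j).filter (fun l => a l.1 ≠ l.2)).toList.get ⟨k, h⟩}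
          else ∅, ?_, ?_⟩
    · rintro ((i | i) | ⟨j, k⟩)
      · simp
      · simp
      · dsimp only; split <;> simp
    · rintro (⟨i, b⟩ | j) s hps
      · have hs : s = (i, b) := by
          by_contra h
          dsimp only at hps
          rw [if_neg h] at hps
          exact lt_irrefl 0 hps
        subst hs
        rw [mem_Hset]
        by_cases hb : b = a i
        · exact ⟨Sum.inl (Sum.inl i), rfl, by simp [hb]⟩
        · refine ⟨Sum.inl (Sum.inr i), rfl, ?_⟩
          have : b = !(a i) := by cases b <;> cases hai : a i <;> simp_all
          simp [this]
      · have hs : s ∈ Cl j := by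
          by_contra h
          dsimp only at hps
          rw [if_neg h] at hps
          exact lt_irrefl 0 hps
        rw [mem_Hset]
        by_cases hsa : a s.1 = s.2
        · refine ⟨Sum.inl (Sum.inl s.1), ⟨s.2, by simpa using hs⟩, ?_⟩
          simp only [Finset.mem_singleton]
          rw [hsa]
        · have hsF : s ∈ (Cl j).filter (fun l => a l.1 ≠ l.2) :=
            Finset.mem_filter.mpr ⟨hs, hsa⟩
          obtain ⟨l0, hl0, hal0⟩ := ha j
          have hFcard : ((Cl j).filter (fun l => a l.1 ≠ l.2)).card ≤ (Cl j).card - 1 := by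
            have hsub : (Cl j).filter (fun l => a l.1 ≠ l.2) ⊆ (Cl j).erase l0 := by
              intro x hx
              rw [Finset.mem_filter] at hx
              refine Finset.mem_erase.mpr ⟨?_, hx.1⟩
              rintro rfl
              exact hx.2 hal0
            calc ((Cl j).filter (fun l => a l.1 ≠ l.2)).card
                ≤ ((Cl j).erase l0).card := Finset.card_le_card hsub
              _ = (Cl j).card - 1 := Finset.card_erase_of_mem hl0
          obtain ⟨idx, hget⟩ := List.mem_iff_get.mp (Finset.mem_toList.mpr hsF)
          have hlen : ((Cl j).filter (fun l => a l.1 ≠ l.2)).toList.length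
              = ((Cl j).filter (fun l => a l.1 ≠ l.2)).card := Finset.length_toList _
          have hidx : (idx : ℕ) < (Cl j).card - 1 := by
            have h2 := idx.2
            omega
          refine ⟨Sum.inr ⟨j, ⟨idx, hidx⟩⟩, rfl, ?_⟩
          have hcond : ((⟨(idx : ℕ), hidx⟩ : Fin ((Cl j).card - 1)) : ℕ)
              < ((Cl j).filter (fun l => a l.1 ≠ l.2)).toList.length := idx.2
          dsimp only
          rw [dif_pos hcond]
          simp only [Finset.mem_singleton]
          rw [← hget]
  · rintro ⟨Z, hcap, hcov⟩
    set a : Fin n → Bool :=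
      fun i => if (i, true) ∈ Z (Sum.inl (Sum.inl i)) then true else false with ha_def
    have hsingle : ∀ {c x y}, x ∈ Z c → y ∈ Z c → x = y := fun {c x y} hx hy =>
      Finset.card_le_one.mp (hcap c) x hx y hy
    have hcover : ∀ i b, (i, b) ∈ Z (Sum.inl (Sum.inl i)) ∨ (i, b) ∈ Z (Sum.inl (Sum.inr i)) := by
      intro i b
      have h1 := hcov (Sum.inl (i, b)) (i, b) (by simp)
      rw [mem_Hset] at h1
      obtain ⟨c, hadj, hmem⟩ := h1
      rcases c with (i' | i') | jk
      · dsimp only at hadj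
        subst hadj
        exact Or.inl hmem
      · dsimp only at hadj
        subst hadj
        exact Or.inr hmem
      · exact hadj.elim
    have hZi : ∀ i, Z (Sum.inl (Sum.inl i)) = {(i, a i)} := by
      intro i
      by_cases ht : (i, true) ∈ Z (Sum.inl (Sum.inl i))
      · have ha' : a i = true := by simp [ha_def, ht]
        rw [ha']
        exact Finset.eq_singleton_iff_unique_mem.mpr ⟨ht, fun y hy => hsingle hy ht⟩
      · have ha' : a i = false := by simp [ha_def, ht]
        rw [ha']
        have ht' : (i, true) ∈ Z (Sum.inl (Sum.inr i)) := (hcover i true).resolve_left ht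
        have hf : (i, false) ∈ Z (Sum.inl (Sum.inl i)) := by
          rcases hcover i false with h | h
          · exact h
          · exact absurd (hsingle h ht') (by simp)
        exact Finset.eq_singleton_iff_unique_mem.mpr ⟨hf, fun y hy => hsingle hy hf⟩
    refine ⟨a, fun j => ?_⟩
    by_contra hcon
    push_neg at hcon
    have hpriv : Cl j ⊆
        Finset.univ.biUnion (fun k : Fin ((Cl j).card - 1) => Z (Sum.inr ⟨j, k⟩)) := by
      intro s hs
      have h1 := hcov (Sum.inr j) s
        (by dsimp only; rw [if_pos hs]; exact one_div_pos.mpr (hcpos j))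
      rw [mem_Hset] at h1
      obtain ⟨c, hadj, hmem⟩ := h1
      rcases c with (i' | i') | ⟨j', k⟩
      · rw [hZi i', Finset.mem_singleton] at hmem
        subst hmem
        exact absurd rfl (hcon (i', a i') hs)
      · exact hadj.elim
      · dsimp only at hadj
        subst hadj
        exact Finset.mem_biUnion.mpr ⟨k, Finset.mem_univ k, hmem⟩
    have hcount : (Cl j).card ≤ (Cl j).card - 1 := by
      calc (Cl j).card
          ≤ (Finset.univ.biUnion
              (fun k : Fin ((Cl j).card - 1) => Z (Sum.inr ⟨j, k⟩))).card :=
            Finset.card_le_card hpriv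
        _ ≤ ∑ k : Fin ((Cl j).card - 1), (Z (Sum.inr ⟨j, k⟩)).card :=
            Finset.card_biUnion_le
        _ ≤ ∑ _k : Fin ((Cl j).card - 1), 1 := Finset.sum_le_sum (fun k _ => hcap _)
        _ = (Cl j).card - 1 := by simp
    have := hc0 j
    omega
end
end
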